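/- The contraction poset of ν-Schröder paths admits an acyclic partial matching (in the sense of discrete Morse theory) whose unique critical element is the path N^a E^b; the matching pairs each path σ having a D step not preceded by any valley with the path π obtained by replacing the first such D step by EN. -/

import Mathlib

/-- Steps of a (Schröder) lattice path: north, east, diagonal. -/
inductive Step : Type
  | N | E | D
deriving DecidableEq, Repr

/-- Total horizontal displacement of a path. -/
def eLen (p : List Step) : ℕ := p.count Step.E + p.count Step.D

/-- Total vertical displacement of a path. -/
def nLen (p : List Step) : ℕ := p.count Step.N + p.count Step.D

/-- A lattice path uses only `N` and `E` steps. -/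
def IsLatticePath (ν : List Step) : Prop := Step.D ∉ ν

/-- `colVal p x` is twice the starting height of the step of `p` crossing the vertical
strip between abscissas `x` and `x+1`, plus `1` if that step is diagonal.  Comparing these
values columnwise is equivalent to comparing the heights of the paths over each strip. -/
def colVal : List Step → ℕ → ℕ
  | [], _ => 0
  | Step.N :: p, x => colVal p x + 2
  | Step.E :: _, 0 => 0
  | Step.E :: p, x+1 => colVal p x
  | Step.D :: _, 0 => 1
  | Step.D :: p, x+1 => colVal p x + 2

/-- `π` stays weakly above `ρ` (same endpoints intended). -/
def WeaklyAbove (π ρ : List Step) : Prop := ∀ x, colVal ρ x ≤ colVal π x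

/-- Replace every peak (consecutive `NE`) of a path by a diagonal step; applied to `ν`
this gives the path `μ` of the large ν-Schröder path definition. -/
def cutPeaks : List Step → List Step
  | [] => []
  | Step.N :: Step.E :: p => Step.D :: cutPeaks p
  | s :: p => s :: cutPeaks p

/-- A ν-Dyck path: an `N,E` path with the same endpoints as `ν` staying weakly above `ν`. -/
def IsNuDyck (ν π : List Step) : Prop :=
  Step.D ∉ π ∧ eLen π = eLen ν ∧ nLen π = nLen ν ∧ WeaklyAbove π ν

/-- A (small) ν-Schröder path: an `N,E,D` path with the same endpoints as `ν` staying weakly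
above `ν` (this automatically forbids diagonal steps on the ν-diagonal). -/
def IsSmallSchroder (ν π : List Step) : Prop :=
  eLen π = eLen ν ∧ nLen π = nLen ν ∧ WeaklyAbove π ν

/-- A large ν-Schröder path: an `N,E,D` path with the same endpoints as `ν` staying weakly
above the path obtained from `ν` by replacing each peak by a diagonal step. -/
def IsLargeSchroder (ν π : List Step) : Prop :=
  eLen π = eLen ν ∧ nLen π = nLen ν ∧ WeaklyAbove π (cutPeaks ν)

/-- Number of peaks (consecutive `NE` pairs). -/
def peaks (p : List Step) : ℕ := (p.zip p.tail).count (Step.N, Step.E)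

/-- Number of valleys (consecutive `EN` pairs). -/
def valleys (p : List Step) : ℕ := (p.zip p.tail).count (Step.E, Step.N)

/-- Lattice points at which valleys of a path occur (starting the path at `(x,y)`). -/
def valleyPts : List Step → ℕ → ℕ → List (ℕ × ℕ)
  | [], _, _ => []
  | Step.E :: p, x, y =>
      (if p.head? = some Step.N then [(x+1, y)] else []) ++ valleyPts p (x+1) y
  | Step.N :: p, x, y => valleyPts p x (y+1)
  | Step.D :: p, x, y => valleyPts p (x+1) (y+1)

/-- Lattice points at which high peaks (peaks strictly above `ν`) of a path occur. -/
def highPeakPts (ν : List Step) : List Step → ℕ → ℕ → List (ℕ × ℕ)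
  | [], _, _ => []
  | Step.N :: p, x, y =>
      (if p.head? = some Step.E ∧ colVal ν x < 2*(y+1) then [(x, y+1)] else []) ++
        highPeakPts ν p x (y+1)
  | Step.E :: p, x, y => highPeakPts ν p (x+1) y
  | Step.D :: p, x, y => highPeakPts ν p (x+1) (y+1)

/-- Number of high peaks of `π` relative to `ν`. -/
def highPeaks (ν π : List Step) : ℕ := (highPeakPts ν π 0 0).length

/-- j-th ν-Narayana number: number of ν-Dyck paths with exactly `j` valleys. -/
noncomputable def Nar (ν : List Step) (j : ℕ) : ℕ :=
  Nat.card {π : List Step // IsNuDyck ν π ∧ valleys π = j}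

/-- Number of small ν-Schröder paths with exactly `i` diagonal steps. -/
noncomputable def schNum (ν : List Step) (i : ℕ) : ℕ :=
  Nat.card {π : List Step // IsSmallSchroder ν π ∧ π.count Step.D = i}

/-- `lowH ν x` is the lowest height of a point of `ν` at abscissa `x`. -/
def lowH : List Step → ℕ → ℕ
  | _, 0 => 0
  | [], _+1 => 0
  | Step.N :: p, x+1 => lowH p (x+1) + 1
  | Step.E :: p, x+1 => lowH p x
  | Step.D :: p, x+1 => lowH p x + 1

/-- The lowest lattice path from `(0,0)` to `(b,a)` weakly above the line segment
from `(0,0)` to `(b,a)`. -/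
def nuAB (a b : ℕ) : List Step :=
  (List.range b).flatMap (fun x =>
    List.replicate (((x+1)*a + b - 1)/b - (x*a + b - 1)/b) Step.N ++ [Step.E])

/-- Number of large rational `(a,b)`-Schröder paths with `i` diagonal steps. -/
noncomputable def largeCount (a b i : ℕ) : ℕ :=
  Nat.card {π : List Step // IsLargeSchroder (nuAB a b) π ∧ π.count Step.D = i}

/-- Number of small rational `(a,b)`-Schröder paths with `i` diagonal steps. -/
noncomputable def smallCount (a b i : ℕ) : ℕ :=
  Nat.card {π : List Step // IsSmallSchroder (nuAB a b) π ∧ π.count Step.D = i}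

/-- Binomial coefficient with an integer lower entry (zero when negative). -/
def chooseZ (n : ℕ) (k : ℤ) : ℕ := if 0 ≤ k then n.choose k.toNat else 0

/-- The region weakly above `ν` in the rectangle `[0,b] × [0,a]`. -/
def InRegion (ν : List Step) (p : ℕ × ℕ) : Prop :=
  p.1 ≤ eLen ν ∧ p.2 ≤ nLen ν ∧ lowH ν p.1 ≤ p.2

/-- Two points of the region are ν-incompatible if one is strictly southwest of the other and
the rectangle they span lies in the region (equivalently its bottom-right corner does). -/
def Incompat (ν : List Step) (p q : ℕ × ℕ) : Prop :=
  ((p.1 < q.1 ∧ p.2 < q.2) ∨ (q.1 < p.1 ∧ q.2 < p.2)) ∧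
    InRegion ν (max p.1 q.1, min p.2 q.2)

/-- A ν-binary tree: a maximal set of pairwise ν-compatible points of the region. -/
def IsBinaryTree (ν : List Step) (T : Finset (ℕ × ℕ)) : Prop :=
  (∀ p ∈ T, InRegion ν p) ∧ (∀ p ∈ T, ∀ q ∈ T, ¬ Incompat ν p q) ∧
    ∀ r, InRegion ν r → (∀ p ∈ T, ¬ Incompat ν r p) → r ∈ T

/-- A ν-Schröder tree: pairwise ν-compatible points of the region containing the root
`(0,a)` and meeting every row and every column. -/
def IsSchroderTree (ν : List Step) (T : Finset (ℕ × ℕ)) : Prop :=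
  (∀ p ∈ T, InRegion ν p) ∧ (∀ p ∈ T, ∀ q ∈ T, ¬ Incompat ν p q) ∧
    (0, nLen ν) ∈ T ∧ (∀ y ≤ nLen ν, ∃ p ∈ T, p.2 = y) ∧ (∀ x ≤ eLen ν, ∃ p ∈ T, p.1 = x)

/-- One contraction step: delete a node, provided the result is still a ν-Schröder tree. -/
def ContractStep (ν : List Step) (T T' : Finset (ℕ × ℕ)) : Prop :=
  ∃ q ∈ T, T' = T.erase q ∧ IsSchroderTree ν T'

/-- `p` is a leaf of the (plane tree associated to the) node set `T`: no node strictly below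
it in its column and none strictly to its right in its row. -/
def IsLeafIn (T : Finset (ℕ × ℕ)) (p : ℕ × ℕ) : Prop :=
  (∀ q ∈ T, ¬(q.1 = p.1 ∧ q.2 < p.2)) ∧ (∀ q ∈ T, ¬(q.2 = p.2 ∧ p.1 < q.1))

/-- Starting points of vertical runs and ending points of horizontal runs of `ν`. -/
def leafPts (ν : List Step) : Finset (ℕ × ℕ) :=
  (valleyPts ν 0 0).toFinset ∪ (if ν.head? = some Step.N then {((0 : ℕ), (0 : ℕ))} else ∅) ∪
    (if ν.getLast? = some Step.E then {(eLen ν, nLen ν)} else ∅)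

/-- `horizNu ν x y`: maximal number of east steps that can be placed starting at `(x,y)`
before crossing `ν` (staying within the bounding rectangle). -/
def horizNu (ν : List Step) (x y : ℕ) : ℕ :=
  ((Finset.Icc 1 (eLen ν - x)).filter (fun k => lowH ν (x + k) ≤ y)).card

/-- No `N` step of the given path (started at `(x,y)`) has initial point with
`horizNu`-value `h`. -/
def noNAt (ν : List Step) (h : ℕ) : List Step → ℕ → ℕ → Prop
  | [], _, _ => True
  | Step.N :: p, x, y => horizNu ν x y ≠ h ∧ noNAt ν h p x (y+1)
  | Step.E :: p, x, y => noNAt ν h p (x+1) y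
  | Step.D :: p, x, y => noNAt ν h p (x+1) (y+1)

/-- Right contraction: replace a consecutive `EN` pair (a valley) by a `D` step. -/
def RightC (μ lam : List Step) : Prop :=
  ∃ p q, μ = p ++ Step.E :: Step.N :: q ∧ lam = p ++ Step.D :: q

/-- Left contraction: delete an `E` step together with the most recent preceding `N` step
whose initial point has the same `horizNu` statistic as the initial point of the `E` step,
shift the intermediate subpath, and place a `D` step at the initial point of the `N` step. -/
def LeftC (ν μ lam : List Step) : Prop :=
  ∃ p m q, μ = p ++ Step.N :: (m ++ Step.E :: q) ∧ lam = p ++ Step.D :: (m ++ q) ∧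
    horizNu ν (eLen p) (nLen p)
      = horizNu ν (eLen (p ++ Step.N :: m)) (nLen (p ++ Step.N :: m)) ∧
    noNAt ν (horizNu ν (eLen (p ++ Step.N :: m)) (nLen (p ++ Step.N :: m)))
      m (eLen p) (nLen p + 1)

/-- Diagonal contraction: delete an `E` step ending at the initial point `r` of a `D` step,
together with the most recent preceding `N` step whose initial point `s` satisfies
`horizNu s = horizNu r`, shift the intermediate subpath, and place a `D` step at `s`. -/
def DiagC (ν μ lam : List Step) : Prop :=
  ∃ p m q, μ = p ++ Step.N :: (m ++ Step.E :: Step.D :: q) ∧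
    lam = p ++ Step.D :: (m ++ Step.D :: q) ∧
    horizNu ν (eLen p) (nLen p)
      = horizNu ν (eLen (p ++ Step.N :: m) + 1) (nLen (p ++ Step.N :: m)) ∧
    noNAt ν (horizNu ν (eLen (p ++ Step.N :: m) + 1) (nLen (p ++ Step.N :: m)))
      m (eLen p) (nLen p + 1)

/-- Cover relation of the contraction poset of ν-Schröder paths. -/
def Covers (ν μ lam : List Step) : Prop :=
  IsSmallSchroder ν μ ∧ IsSmallSchroder ν lam ∧
    (RightC μ lam ∨ LeftC ν μ lam ∨ DiagC ν μ lam)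

/-- The Morse matching: `σ` (having a `D` step preceded by no valley) is matched with the
path `π` obtained by replacing the first such `D` step by `EN`. -/
def MorseM (ν : List Step) : Set (List Step × List Step) :=
  { z | ∃ p q, Step.D ∉ p ∧ valleys p = 0 ∧
      z.2 = p ++ Step.D :: q ∧ z.1 = p ++ Step.E :: Step.N :: q ∧ IsSmallSchroder ν z.2 }

/-- Twice the area between a small ν-Schröder path and `ν`. -/
def area2 (ν π : List Step) : ℕ :=
  ∑ x ∈ Finset.range (eLen ν), (colVal π x - colVal ν x)

/-- An `(I,J̄)`-forest: increasing, non-crossing arcs. -/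
def IsIJForest (I J : Finset ℕ) (F : Finset (ℕ × ℕ)) : Prop :=
  (∀ a ∈ F, a.1 ∈ I ∧ a.2 ∈ J ∧ a.1 < a.2) ∧
    (∀ a ∈ F, ∀ a' ∈ F, ¬(a.1 < a'.1 ∧ a'.1 < a.2 ∧ a.2 < a'.2))

/-- A covering `(I,J̄)`-forest: contains the arc `(1,n)` and has no isolated node. -/
def IsCoveringForest (n : ℕ) (I J : Finset ℕ) (F : Finset (ℕ × ℕ)) : Prop :=
  IsIJForest I J F ∧ (1, n) ∈ F ∧
    (∀ i ∈ I, ∃ a ∈ F, a.1 = i) ∧ (∀ j ∈ J, ∃ a ∈ F, a.2 = j)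

/-- The lattice path read off from the interleaving of `I` and `J̄` (elements `2,…,n-1`,
`E` for elements of `I`, `N` for the others). -/
def nuOf (n : ℕ) (I : Finset ℕ) : List Step :=
  (List.range' 2 (n - 2)).map (fun k => if k ∈ I then Step.E else Step.N)

/-!
Every matched pair is a right contraction `EN ↦ D`, which raises twice the area below the path
(`dblArea`) by exactly one, while left and diagonal contractions lower it. Along an alternating
cycle `b₁ ≻ d(b₁) ≺ b₂ ≻ ⋯` the area therefore never increases, so it is constant and every
cover `d(bᵢ) ≺ bᵢ₊₁` is a right contraction. In `d(bᵢ) = p ++ EN ++ q` the prefix `p` is free of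
valleys and `D` steps, so contracting any valley other than the displayed one leaves that `EN` in
front of every `D` step, and the result is not matched from below. A path is unmatched exactly
when it has neither a `D` step nor a valley, that is, when it is `NᵃEᵇ`.
-/

section MorseMatching

open Step

@[simp] lemma eLen_nil : eLen [] = 0 := rfl

@[simp] lemma nLen_nil : nLen [] = 0 := rfl

@[simp] lemma eLen_cons (s : Step) (p : List Step) :
    eLen (s :: p) = eLen p + if s = N then 0 else 1 := by
  cases s <;> simp [eLen] <;> omega

@[simp] lemma nLen_cons (s : Step) (p : List Step) :
    nLen (s :: p) = nLen p + if s = E then 0 else 1 := by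
  cases s <;> simp [nLen] <;> omega

@[simp] lemma eLen_append (p q : List Step) : eLen (p ++ q) = eLen p + eLen q := by
  simp only [eLen, List.count_append]; omega

@[simp] lemma nLen_append (p q : List Step) : nLen (p ++ q) = nLen p + nLen q := by
  simp only [nLen, List.count_append]; omega

def IsValleyFreeNE (p : List Step) : Prop := D ∉ p ∧ valleys p = 0

def StartsWithDOrValley (r : List Step) : Prop := (∃ q, r = D :: q) ∨ ∃ q, r = E :: N :: q

@[simp] lemma startsWithDOrValley_D_cons (q : List Step) : StartsWithDOrValley (D :: q) := .inl ⟨q, rfl⟩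

@[simp] lemma startsWithDOrValley_E_N_cons (q : List Step) : StartsWithDOrValley (E :: N :: q) :=
  .inr ⟨q, rfl⟩

lemma StartsWithDOrValley.append {r : List Step} (hr : StartsWithDOrValley r) (s : List Step) :
    StartsWithDOrValley (r ++ s) := by
  rcases hr with ⟨q, rfl⟩ | ⟨q, rfl⟩
  exacts [.inl ⟨q ++ s, rfl⟩, .inr ⟨q ++ s, rfl⟩]

lemma valleys_cons_cons (a b : Step) (t : List Step) :
    valleys (a :: b :: t) = (if a = E ∧ b = N then 1 else 0) + valleys (b :: t) := by
  simp only [valleys, List.tail_cons, List.zip_cons_cons, List.count_cons]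
  cases a <;> cases b <;> simp [add_comm]

lemma valleys_append_EN_pos : ∀ u v : List Step, 0 < valleys (u ++ E :: N :: v)
  | [], v => by simp [valleys_cons_cons]
  | a :: u, v => by
      obtain ⟨b, t, hbt⟩ := List.exists_cons_of_ne_nil (show u ++ E :: N :: v ≠ [] by simp)
      rw [List.cons_append, hbt, valleys_cons_cons, ← hbt]
      have := valleys_append_EN_pos u v
      omega

lemma StartsWithDOrValley.not_isValleyFreeNE {r : List Step} (hr : StartsWithDOrValley r)
    (u : List Step) : ¬ IsValleyFreeNE (u ++ r) := by
  rintro ⟨hD, hv⟩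
  rcases hr with ⟨q, rfl⟩ | ⟨q, rfl⟩
  · simp at hD
  · exact (valleys_append_EN_pos u q).ne' hv

lemma IsValleyFreeNE.of_cons {a : Step} {t : List Step} (h : IsValleyFreeNE (a :: t)) :
    IsValleyFreeNE t := by
  refine ⟨fun hD => h.1 (List.mem_cons_of_mem a hD), ?_⟩
  cases t with
  | nil => rfl
  | cons b t => have := h.2; rw [valleys_cons_cons] at this; omega

lemma IsValleyFreeNE.cons {a : Step} {t : List Step} (ht : IsValleyFreeNE t)
    (hat : ¬ StartsWithDOrValley (a :: t)) : IsValleyFreeNE (a :: t) := by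
  refine ⟨?_, ?_⟩
  · rintro (_ | ⟨_, hD⟩)
    exacts [hat (startsWithDOrValley_D_cons t), ht.1 hD]
  · cases t with
    | nil => rfl
    | cons b t =>
        rw [valleys_cons_cons, ht.2, if_neg]
        rintro ⟨rfl, rfl⟩
        exact hat (startsWithDOrValley_E_N_cons t)

lemma isValleyFreeNE_iff {p : List Step} :
    IsValleyFreeNE p ↔ ∃ i j, p = List.replicate i N ++ List.replicate j E := by
  constructor
  · intro hp
    induction p with
    | nil => exact ⟨0, 0, rfl⟩
    | cons a t ih =>
        obtain ⟨i, j, rfl⟩ := ih hp.of_cons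
        cases a with
        | N => exact ⟨i + 1, j, rfl⟩
        | E =>
            cases i with
            | zero => exact ⟨0, j + 1, rfl⟩
            | succ i =>
                exact absurd hp ((startsWithDOrValley_E_N_cons _).not_isValleyFreeNE [])
        | D => exact absurd List.mem_cons_self hp.1
  · rintro ⟨i, j, rfl⟩
    induction i with
    | zero =>
        induction j with
        | zero => exact ⟨by simp, rfl⟩
        | succ j ih =>
            exact ih.cons (by cases j <;> simp [StartsWithDOrValley, List.replicate_succ])
    | succ i ih => exact ih.cons (by simp [StartsWithDOrValley])

lemma exists_isValleyFreeNE_append {π : List Step} (hπ : ¬ IsValleyFreeNE π) :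
    ∃ u r, IsValleyFreeNE u ∧ StartsWithDOrValley r ∧ π = u ++ r := by
  induction π with
  | nil => exact absurd ⟨by simp, rfl⟩ hπ
  | cons a t ih =>
      by_cases hat : StartsWithDOrValley (a :: t)
      · exact ⟨[], a :: t, ⟨by simp, rfl⟩, hat, rfl⟩
      obtain ⟨u, r, hu, hr, rfl⟩ := ih fun ht => hπ (ht.cons hat)
      exact ⟨a :: u, r, hu.cons fun hau => hat (hau.append r), hr, rfl⟩

lemma length_le_of_append_eq_append {p p' r r' : List Step} (hp' : IsValleyFreeNE p')
    (hr : StartsWithDOrValley r) (hr' : StartsWithDOrValley r') (h : p ++ r = p' ++ r') :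
    p'.length ≤ p.length := by
  rcases List.append_eq_append_iff.mp h with ⟨c, rfl, rfl⟩ | ⟨c, rfl, -⟩
  · cases c with
    | nil => simp
    | cons a c =>
        exfalso
        rcases hr with ⟨q, hq⟩ | ⟨q, hq⟩
        · obtain ⟨rfl, -⟩ := List.cons.inj hq
          exact hp'.1 (by simp)
        · cases c with
          | nil => rcases hr' with ⟨_, rfl⟩ | ⟨_, rfl⟩ <;> simp at hq
          | cons b c =>
              simp only [List.cons_append, List.cons.injEq] at hq
              obtain ⟨rfl, rfl, -⟩ := hq
              exact (startsWithDOrValley_E_N_cons c).not_isValleyFreeNE p hp'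
  · simp

lemma IsValleyFreeNE.append_inj {p p' r r' : List Step} (hp : IsValleyFreeNE p)
    (hp' : IsValleyFreeNE p') (hr : StartsWithDOrValley r) (hr' : StartsWithDOrValley r')
    (h : p ++ r = p' ++ r') : p = p' ∧ r = r' :=
  List.append_inj h <| le_antisymm (length_le_of_append_eq_append hp hr' hr h.symm)
    (length_le_of_append_eq_append hp' hr hr' h)

lemma mem_morseM {ν σ π : List Step} :
    (σ, π) ∈ MorseM ν ↔ ∃ p q, IsValleyFreeNE p ∧ π = p ++ D :: q ∧
      σ = p ++ E :: N :: q ∧ IsSmallSchroder ν π := by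
  simp [MorseM, IsValleyFreeNE, and_assoc]

lemma colVal_append_D : ∀ (p q : List Step) (x : ℕ),
    colVal (p ++ D :: q) x = colVal (p ++ E :: N :: q) x + if x = eLen p then 1 else 0
  | [], _, 0 | [], _, _ + 1 => by simp [colVal]
  | E :: p, q, 0 | D :: p, q, 0 => by simp [colVal]
  | N :: p, q, x | E :: p, q, x + 1 | D :: p, q, x + 1 => by
      simp [colVal, colVal_append_D p q x, add_right_comm]

lemma colVal_append_E_eLen : ∀ p q : List Step, colVal (p ++ E :: q) (eLen p) = 2 * nLen p
  | [], _ => rfl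
  | N :: p, q | E :: p, q | D :: p, q => by simp [colVal, colVal_append_E_eLen p q] <;> ring

lemma IsLatticePath.two_dvd_colVal : ∀ {ν : List Step}, IsLatticePath ν → ∀ x, 2 ∣ colVal ν x
  | [], _, _ | E :: _, _, 0 => by simp [colVal]
  | N :: ν, h, x => by
      simpa [colVal] using two_dvd_colVal (ν := ν) (fun hD => h (List.mem_cons_of_mem _ hD)) x
  | E :: ν, h, x + 1 => two_dvd_colVal (ν := ν) (fun hD => h (List.mem_cons_of_mem _ hD)) x
  | D :: _, h, _ => absurd List.mem_cons_self h

lemma IsSmallSchroder.append_D {ν p q : List Step} (h : IsSmallSchroder ν (p ++ E :: N :: q)) :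
    IsSmallSchroder ν (p ++ D :: q) := by
  obtain ⟨he, hn, hw⟩ := h
  refine ⟨by simp at he ⊢; omega, by simp at hn ⊢; omega, fun x => ?_⟩
  have := hw x
  rw [colVal_append_D]
  omega

lemma IsSmallSchroder.append_E_N {ν p q : List Step} (hν : IsLatticePath ν)
    (h : IsSmallSchroder ν (p ++ D :: q)) : IsSmallSchroder ν (p ++ E :: N :: q) := by
  obtain ⟨he, hn, hw⟩ := h
  refine ⟨by simp at he ⊢; omega, by simp at hn ⊢; omega, fun x => ?_⟩
  have hx := hw x
  rw [colVal_append_D] at hx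
  split_ifs at hx with h
  · subst h
    -- `colVal` is odd at the `D` step and even along `ν`, so lowering it by one stays above `ν`
    have := hν.two_dvd_colVal (eLen p)
    have := colVal_append_E_eLen p (N :: q)
    omega
  · exact hx

/-- Twice the area between a path and the lowest path `EᵇNᵃ` with the same endpoints, a `D` step
cutting a unit square in half. -/
def dblArea : List Step → ℕ
  | [] => 0
  | N :: q => dblArea q + 2 * eLen q
  | E :: q => dblArea q
  | D :: q => dblArea q + 2 * eLen q + 1

lemma dblArea_append (p q : List Step) :
    dblArea (p ++ q) = dblArea p + 2 * nLen p * eLen q + dblArea q := by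
  induction p with
  | nil => simp [dblArea]
  | cons s p ih => cases s <;> simp [dblArea, ih] <;> ring

lemma dblArea_of_rightC {μ lam : List Step} (h : RightC μ lam) : dblArea lam = dblArea μ + 1 := by
  obtain ⟨p, q, rfl, rfl⟩ := h
  simp [dblArea_append, dblArea]
  ring

lemma Covers.rightC_or_dblArea_lt {ν μ lam : List Step} (h : Covers ν μ lam) :
    RightC μ lam ∨ dblArea lam < dblArea μ := by
  rcases h.2.2 with h | ⟨p, m, q, rfl, rfl, -⟩ | ⟨p, m, q, rfl, rfl, -⟩
  · exact .inl h
  all_goals right; simp [dblArea_append, dblArea]; nlinarith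

lemma rightC_of_mem_morseM {ν σ π : List Step} (h : (σ, π) ∈ MorseM ν) : RightC σ π := by
  obtain ⟨p, q, -, rfl, rfl, -⟩ := mem_morseM.mp h
  exact ⟨p, q, rfl, rfl⟩

lemma covers_of_mem_morseM {ν σ π : List Step} (hν : IsLatticePath ν) (h : (σ, π) ∈ MorseM ν) :
    Covers ν σ π := by
  obtain ⟨p, q, -, rfl, rfl, hπ⟩ := mem_morseM.mp h
  exact ⟨hπ.append_E_N hν, hπ, .inl ⟨p, q, rfl, rfl⟩⟩

lemma eq_of_mem_morseM_of_overlap {ν : List Step} {z w : List Step × List Step}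
    (hz : z ∈ MorseM ν) (hw : w ∈ MorseM ν)
    (h : z.1 = w.1 ∨ z.1 = w.2 ∨ z.2 = w.1 ∨ z.2 = w.2) : z = w := by
  obtain ⟨σ, π⟩ := z
  obtain ⟨σ', π'⟩ := w
  obtain ⟨p, q, hp, rfl, rfl, -⟩ := mem_morseM.mp hz
  obtain ⟨p', q', hp', rfl, rfl, -⟩ := mem_morseM.mp hw
  rcases h with h | h | h | h <;>
    obtain ⟨rfl, h⟩ := hp.append_inj hp' (by simp) (by simp) h <;>
    simp_all

lemma exists_eq_append_E_N_of_length_lt {p q u v : List Step}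
    (h : p ++ E :: N :: q = u ++ E :: N :: v) (hlt : p.length < u.length) :
    ∃ c, u = p ++ E :: N :: c := by
  rcases List.append_eq_append_iff.mp h with ⟨c, rfl, hc⟩ | ⟨c, rfl, -⟩
  · rcases c with _ | ⟨a, _ | ⟨b, c⟩⟩ <;> simp_all
  · simp at hlt

lemma eq_of_mem_morseM_of_rightC {ν σ π σ' π' : List Step} (h : (σ, π) ∈ MorseM ν)
    (h' : (σ', π') ∈ MorseM ν) (hc : RightC σ π') : π' = π := by
  obtain ⟨p, q, hp, rfl, rfl, -⟩ := mem_morseM.mp h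
  obtain ⟨p', q', hp', rfl, -⟩ := mem_morseM.mp h'
  obtain ⟨u, v, hd, hb⟩ := hc
  have hle := length_le_of_append_eq_append hp (startsWithDOrValley_E_N_cons v)
    (startsWithDOrValley_E_N_cons q) hd.symm
  rcases hle.lt_or_eq with hlt | heq
  · obtain ⟨c, rfl⟩ := exists_eq_append_E_N_of_length_lt hd hlt
    have := (hp.append_inj hp' (startsWithDOrValley_E_N_cons (c ++ D :: v))
      (startsWithDOrValley_D_cons q') (by simpa using hb.symm)).2
    simp at this
  · obtain ⟨rfl, hq⟩ := List.append_inj hd heq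
    simp_all

lemma Fin.apply_add_one_eq_of_le {M : Type*} [AddCommMonoid M] [PartialOrder M]
    [IsOrderedCancelAddMonoid M] {n : ℕ} [NeZero n] {f : Fin n → M}
    (h : ∀ i, f (i + 1) ≤ f i) (i : Fin n) : f (i + 1) = f i :=
  (Finset.sum_eq_sum_iff_of_le fun i _ => h i).mp
    (Fintype.sum_equiv (Equiv.addRight 1) _ _ fun _ => rfl) i (Finset.mem_univ i)

lemma not_exists_morseM_cycle (ν : List Step) :
    ¬ ∃ (n : ℕ) (bs ds : Fin (n + 2) → List Step), Function.Injective bs ∧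
        (∀ i, (ds i, bs i) ∈ MorseM ν) ∧ (∀ i, Covers ν (ds i) (bs (i + 1))) := by
  rintro ⟨n, bs, ds, hinj, hM, hC⟩
  have hpair i : dblArea (bs i) = dblArea (ds i) + 1 :=
    dblArea_of_rightC (rightC_of_mem_morseM (hM i))
  have hdesc i : dblArea (bs (i + 1)) ≤ dblArea (bs i) := by
    rcases (hC i).rightC_or_dblArea_lt with h | h
    · rw [dblArea_of_rightC h, hpair i]
    · rw [hpair i]; omega
  have hflat : dblArea (bs 1) = dblArea (bs 0) := by
    simpa using Fin.apply_add_one_eq_of_le (f := dblArea ∘ bs) hdesc 0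
  have hright : RightC (ds 0) (bs 1) := by
    rcases (hC 0).rightC_or_dblArea_lt with h | h
    · simpa using h
    · rw [zero_add] at h; have := hpair 0; omega
  exact zero_ne_one (hinj (eq_of_mem_morseM_of_rightC (hM 0) (hM 1) hright).symm)

lemma forall_not_mem_morseM_iff {ν π : List Step} (hπ : IsSmallSchroder ν π) :
    (∀ σ, (π, σ) ∉ MorseM ν ∧ (σ, π) ∉ MorseM ν) ↔
      π = List.replicate (nLen ν) N ++ List.replicate (eLen ν) E := by
  constructor
  · intro hun
    have hfree : IsValleyFreeNE π := by
      by_contra hπ'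
      obtain ⟨u, r, hu, (⟨q, rfl⟩ | ⟨q, rfl⟩), rfl⟩ := exists_isValleyFreeNE_append hπ'
      · exact (hun _).2 (mem_morseM.mpr ⟨u, q, hu, rfl, rfl, hπ⟩)
      · exact (hun _).1 (mem_morseM.mpr ⟨u, q, hu, rfl, rfl, hπ.append_D⟩)
    obtain ⟨i, j, rfl⟩ := isValleyFreeNE_iff.mp hfree
    obtain ⟨he, hn, -⟩ := hπ
    rw [← he, ← hn]
    simp [eLen, nLen, List.count_replicate]
  · rintro rfl σ
    have hfree : IsValleyFreeNE (List.replicate (nLen ν) N ++ List.replicate (eLen ν) E) :=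
      isValleyFreeNE_iff.mpr ⟨_, _, rfl⟩
    refine ⟨fun h => ?_, fun h => ?_⟩
    · obtain ⟨p, q, -, -, hπ, -⟩ := mem_morseM.mp h
      exact (startsWithDOrValley_E_N_cons q).not_isValleyFreeNE p (hπ ▸ hfree)
    · obtain ⟨p, q, -, hπ, -⟩ := mem_morseM.mp h
      exact (startsWithDOrValley_D_cons q).not_isValleyFreeNE p (hπ ▸ hfree)

end MorseMatching

/-- The contraction poset of ν-Schröder paths admits an acyclic partial
matching whose unique critical element is the path `NᵃEᵇ`: the matching pairs each path σ
having a `D` step preceded by no valley with the path π obtained by replacing the first such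
`D` step by `EN`.  Explicitly: each matched pair is a cover relation; the matching is a
partial matching; it has no alternating cycle `b₁ ≻ d(b₁) ≺ b₂ ≻ ⋯ ≺ b_n ≻ d(b_n) ≺ b₁`
with `n ≥ 2` and distinct `bᵢ`; and a ν-Schröder path is unmatched iff it equals `NᵃEᵇ`. -/
theorem morse_matching (ν : List Step) (hν : IsLatticePath ν) :
    (∀ z ∈ MorseM ν, Covers ν z.1 z.2) ∧
    (∀ z ∈ MorseM ν, ∀ w ∈ MorseM ν,
        (z.1 = w.1 ∨ z.1 = w.2 ∨ z.2 = w.1 ∨ z.2 = w.2) → z = w) ∧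
    (¬ ∃ (n : ℕ) (bs ds : Fin (n + 2) → List Step), Function.Injective bs ∧
        (∀ i, (ds i, bs i) ∈ MorseM ν) ∧ (∀ i, Covers ν (ds i) (bs (i + 1)))) ∧
    (∀ π : List Step, IsSmallSchroder ν π →
        ((∀ σ : List Step, (π, σ) ∉ MorseM ν ∧ (σ, π) ∉ MorseM ν) ↔
          π = List.replicate (nLen ν) Step.N ++ List.replicate (eLen ν) Step.E)) :=
  ⟨fun _ hz => covers_of_mem_morseM hν hz, fun _ hz _ hw => eq_of_mem_morseM_of_overlap hz hw,
    not_exists_morseM_cycle ν, fun _ => forall_not_mem_morseM_iff⟩
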